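/- The block-coordinate update does not decrease the objective: fix an index j and f_1 ∈ H_1, …, f_J ∈ H_J with ‖f_j‖ = 1. If the partial gradient G = 2 · Σ_{j'≠j} c_{jj'} · g'(⟨f_j, Σ_{jj'} f_{j'}⟩) · Σ_{jj'} f_{j'} is nonzero, then replacing the j-th block by its normalized gradient satisfies Ψ(f_1, …, f_{j-1}, G/‖G‖, f_{j+1}, …, f_J) ≥ Ψ(f_1, …, f_J). -/
import Mathlib


open scoped RealInnerProductSpace
open Finset Topology Filter

/-- The FGCCA objective `Ψ(f₁, …, f_J) = Σ_{j≠j'} c_{jj'} g(⟨f_j, Σ_{jj'} f_{j'}⟩)`. -/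
noncomputable def Psi {J : ℕ} (H : Fin J → Type*) [∀ j, NormedAddCommGroup (H j)]
    [∀ j, InnerProductSpace ℝ (H j)]
    (S : ∀ j j' : Fin J, H j' →L[ℝ] H j) (c : Fin J → Fin J → ℝ) (g : ℝ → ℝ)
    (f : ∀ j, H j) : ℝ :=
  ∑ j, ∑ j', if j = j' then 0 else c j j' * g ⟪f j, S j j' (f j')⟫

/-- The partial gradient `G = 2 Σ_{j'≠j} c_{jj'} g'(⟨f_j, Σ_{jj'} f_{j'}⟩) Σ_{jj'} f_{j'}`
of the FGCCA objective with respect to the `j`-th block, evaluated with `j`-th block `fj`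
and the other blocks given by `f0`. -/
noncomputable def gradG {J : ℕ} (H : Fin J → Type*) [∀ j, NormedAddCommGroup (H j)]
    [∀ j, InnerProductSpace ℝ (H j)]
    (S : ∀ j j' : Fin J, H j' →L[ℝ] H j) (c : Fin J → Fin J → ℝ) (g' : ℝ → ℝ)
    (j : Fin J) (fj : H j) (f0 : ∀ j, H j) : H j :=
  (2 : ℝ) • ∑ j' ∈ univ.filter (fun j' => j' ≠ j),
    (c j j' * g' ⟪fj, S j j' (f0 j')⟫) • S j j' (f0 j')

lemma tangent_le {g g' : ℝ → ℝ} (hconv : ConvexOn ℝ Set.univ g)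
    (hg : ∀ x, HasDerivAt g (g' x) x) (x y : ℝ) :
    g x + g' x * (y - x) ≤ g y := by
  rcases lt_trichotomy x y with h | h | h
  · have := hconv.le_slope_of_hasDerivAt (Set.mem_univ x) (Set.mem_univ y) h (hg x)
    rw [slope_def_field, le_div_iff₀ (by linarith)] at this
    linarith
  · subst h; simp
  · have := hconv.slope_le_of_hasDerivAt (Set.mem_univ y) (Set.mem_univ x) h (hg x)
    rw [slope_def_field, div_le_iff₀ (by linarith)] at this
    nlinarith

theorem stmt6 (J : ℕ) (hJ : 2 ≤ J) (H : Fin J → Type*)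
    [∀ j, NormedAddCommGroup (H j)] [∀ j, InnerProductSpace ℝ (H j)]
    [∀ j, CompleteSpace (H j)]
    (S : ∀ j j' : Fin J, H j' →L[ℝ] H j)
    (hadj : ∀ j j', j ≠ j' → S j' j = ContinuousLinearMap.adjoint (S j j'))
    (c : Fin J → Fin J → ℝ) (hsym : ∀ j j', c j j' = c j' j)
    (hpos : ∀ j j', 0 ≤ c j j') (hdiag : ∀ j, c j j = 0)
    (g : ℝ → ℝ) (g' : ℝ → ℝ) (hg : ∀ x, HasDerivAt g (g' x) x)
    (hconv : ConvexOn ℝ Set.univ g)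
    (j : Fin J) (f : ∀ j, H j) (hnorm : ‖f j‖ = 1)
    (hG : gradG H S c g' j (f j) f ≠ 0) :
    Psi H S c g
        (Function.update f j
          (‖gradG H S c g' j (f j) f‖⁻¹ • gradG H S c g' j (f j) f)) ≥
      Psi H S c g f := by
  classical
  set G := gradG H S c g' j (f j) f with hGdef
  have hGn : (0:ℝ) < ‖G‖ := norm_pos_iff.mpr hG
  set u : H j := ‖G‖⁻¹ • G with hudef
  set f' := Function.update f j u with hf'def
  have hf'j : f' j = u := Function.update_self j u f
  have hf'ne : ∀ k, k ≠ j → f' k = f k := fun k hk => Function.update_of_ne hk u f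
  -- symmetry of the pairwise terms
  have hswap : ∀ (w : ∀ k, H k) (j1 j2 : Fin J), j1 ≠ j2 →
      ⟪w j1, S j1 j2 (w j2)⟫ = ⟪w j2, S j2 j1 (w j1)⟫ := by
    intro w j1 j2 h
    rw [hadj j1 j2 h, ContinuousLinearMap.adjoint_inner_right]
    exact real_inner_comm _ _
  -- decomposition of Psi
  have hPsi : ∀ w : (∀ k, H k),
      Psi H S c g w =
        (∑ j1, ∑ j2, if j1 = j ∨ j2 = j then 0 else
          (if j1 = j2 then 0 else c j1 j2 * g ⟪w j1, S j1 j2 (w j2)⟫))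
        + 2 * ∑ j2 ∈ univ.filter (fun j2 => j2 ≠ j),
            c j j2 * g ⟪w j, S j j2 (w j2)⟫ := by
    intro w
    have split : ∀ j1 j2 : Fin J,
        (if j1 = j2 then 0 else c j1 j2 * g ⟪w j1, S j1 j2 (w j2)⟫)
        = (if j1 = j ∨ j2 = j then 0 else
            (if j1 = j2 then 0 else c j1 j2 * g ⟪w j1, S j1 j2 (w j2)⟫))
          + (if j1 = j then
              (if j1 = j2 then 0 else c j1 j2 * g ⟪w j1, S j1 j2 (w j2)⟫) else 0)
          + (if j2 = j then
              (if j1 = j2 then 0 else c j1 j2 * g ⟪w j1, S j1 j2 (w j2)⟫) else 0) := by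
      intro j1 j2
      by_cases h1 : j1 = j <;> by_cases h2 : j2 = j <;> simp [h1, h2]
    have e1 : (∑ j1, ∑ j2, if j1 = j then
          (if j1 = j2 then 0 else c j1 j2 * g ⟪w j1, S j1 j2 (w j2)⟫) else 0)
        = ∑ j2 ∈ univ.filter (fun j2 => j2 ≠ j), c j j2 * g ⟪w j, S j j2 (w j2)⟫ := by
      rw [Finset.sum_comm]
      rw [Finset.sum_filter]
      refine Finset.sum_congr rfl fun j2 _ => ?_
      rw [Finset.sum_ite_eq' univ j]
      simp only [Finset.mem_univ, if_true]
      by_cases h : j2 = j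
      · simp [h]
      · rw [if_neg (fun hh => h hh.symm), if_pos h]
    have e2 : (∑ j1, ∑ j2, if j2 = j then
          (if j1 = j2 then 0 else c j1 j2 * g ⟪w j1, S j1 j2 (w j2)⟫) else 0)
        = ∑ j1 ∈ univ.filter (fun j1 => j1 ≠ j), c j j1 * g ⟪w j, S j j1 (w j1)⟫ := by
      rw [Finset.sum_filter]
      refine Finset.sum_congr rfl fun j1 _ => ?_
      rw [Finset.sum_ite_eq' univ j]
      simp only [Finset.mem_univ, if_true]
      by_cases h : j1 = j
      · simp [h]
      · rw [if_neg (fun hh => h hh), if_pos h, hswap w j1 j h, hsym j1 j]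
    unfold Psi
    have hsplit : (∑ j1, ∑ j2, if j1 = j2 then 0 else c j1 j2 * g ⟪w j1, S j1 j2 (w j2)⟫)
        = ∑ j1, ∑ j2, (((if j1 = j ∨ j2 = j then 0 else
            (if j1 = j2 then 0 else c j1 j2 * g ⟪w j1, S j1 j2 (w j2)⟫))
          + (if j1 = j then
              (if j1 = j2 then 0 else c j1 j2 * g ⟪w j1, S j1 j2 (w j2)⟫) else 0))
          + (if j2 = j then
              (if j1 = j2 then 0 else c j1 j2 * g ⟪w j1, S j1 j2 (w j2)⟫) else 0)) :=
      Finset.sum_congr rfl fun j1 _ => Finset.sum_congr rfl fun j2 _ => split j1 j2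
    rw [hsplit]
    simp only [Finset.sum_add_distrib]
    rw [e1, e2]
    ring
  rw [hPsi, hPsi]
  have hfix : (∑ j1, ∑ j2, if j1 = j ∨ j2 = j then 0 else
          (if j1 = j2 then 0 else c j1 j2 * g ⟪f' j1, S j1 j2 (f' j2)⟫))
      = ∑ j1, ∑ j2, if j1 = j ∨ j2 = j then 0 else
          (if j1 = j2 then 0 else c j1 j2 * g ⟪f j1, S j1 j2 (f j2)⟫) := by
    refine Finset.sum_congr rfl fun j1 _ => Finset.sum_congr rfl fun j2 _ => ?_
    by_cases h : j1 = j ∨ j2 = j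
    · simp [h]
    · push_neg at h
      rw [hf'ne j1 h.1, hf'ne j2 h.2]
  rw [hfix]
  have hsum2 : (∑ j2 ∈ univ.filter (fun j2 => j2 ≠ j),
        c j j2 * g ⟪f' j, S j j2 (f' j2)⟫)
      = ∑ j2 ∈ univ.filter (fun j2 => j2 ≠ j), c j j2 * g ⟪u, S j j2 (f j2)⟫ := by
    refine Finset.sum_congr rfl fun j2 hj2 => ?_
    rw [Finset.mem_filter] at hj2
    rw [hf'j, hf'ne j2 hj2.2]
  rw [hsum2]
  -- the key inequality
  have hinner : (0:ℝ) ≤ ⟪u - f j, G⟫ := by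
    rw [inner_sub_left]
    have h3 : ⟪u, G⟫ = ‖G‖ := by
      rw [hudef, real_inner_smul_left, real_inner_self_eq_norm_sq]
      field_simp
    have h4 : ⟪f j, G⟫ ≤ ‖G‖ := by
      have := real_inner_le_norm (f j) G
      rwa [hnorm, one_mul] at this
    linarith
  have hlin : ⟪u - f j, G⟫ = 2 * ∑ j2 ∈ univ.filter (fun j2 => j2 ≠ j),
      (c j j2 * g' ⟪f j, S j j2 (f j2)⟫) *
        (⟪u, S j j2 (f j2)⟫ - ⟪f j, S j j2 (f j2)⟫) := by
    rw [hGdef]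
    unfold gradG
    rw [real_inner_smul_right, inner_sum]
    simp_rw [real_inner_smul_right, inner_sub_left]
  have hmain : ∑ j2 ∈ univ.filter (fun j2 => j2 ≠ j), c j j2 * g ⟪f j, S j j2 (f j2)⟫
      ≤ ∑ j2 ∈ univ.filter (fun j2 => j2 ≠ j), c j j2 * g ⟪u, S j j2 (f j2)⟫ := by
    have step : ∀ i ∈ univ.filter (fun j2 => j2 ≠ j),
        c j i * g ⟪f j, S j i (f i)⟫ +
          (c j i * g' ⟪f j, S j i (f i)⟫) * (⟪u, S j i (f i)⟫ - ⟪f j, S j i (f i)⟫)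
          ≤ c j i * g ⟪u, S j i (f i)⟫ := by
      intro i _
      have ht := tangent_le hconv hg ⟪f j, S j i (f i)⟫ ⟪u, S j i (f i)⟫
      have hc := hpos j i
      nlinarith [mul_le_mul_of_nonneg_left ht hc]
    have := Finset.sum_le_sum step
    rw [Finset.sum_add_distrib] at this
    have hnn : (0:ℝ) ≤ ∑ j2 ∈ univ.filter (fun j2 => j2 ≠ j),
        (c j j2 * g' ⟪f j, S j j2 (f j2)⟫) *
          (⟪u, S j j2 (f j2)⟫ - ⟪f j, S j j2 (f j2)⟫) := by
      nlinarith [hinner, hlin]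
    linarith
  linarith
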